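/- Let A = C[0,1], M = {f ∈ A : f(0)=0}, and define adjointable operators A, D : M → A by (Af)(λ) = λ f(λ) and (Df)(λ) = λ^{2/3} f(λ). Then range(DD*) ⊆ range(A) but range(D) ⊄ range(A); specifically the function f(λ) = λ^{1/3} lies in M and Df = 1 ∉ range(A). -/
import Mathlib


/-- The C*-algebra `A = C[0,1]`. -/
abbrev CA : Type := C(Set.Icc (0:ℝ) 1, ℂ)

/-- The point `0` of `[0,1]`. -/
def pt0 : Set.Icc (0:ℝ) 1 := ⟨0, by norm_num⟩

/-- The maximal ideal `M = {f ∈ C[0,1] : f(0) = 0}` as a Hilbert `C[0,1]`-module. -/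
def MA : Type := {f : CA // f pt0 = 0}

/-- The function `λ ↦ λ^r` as an element of `C[0,1]`, for `0 ≤ r`. -/
noncomputable def powFn (r : ℝ) (hr : 0 ≤ r) : CA :=
  ⟨fun t => (((t : ℝ) ^ r : ℝ) : ℂ),
    Complex.continuous_ofReal.comp ((Real.continuous_rpow_const hr).comp continuous_subtype_val)⟩

/-- `(Af)(λ) = λ f(λ)`, as an operator `M → A`. -/
noncomputable def opA (m : MA) : CA := powFn 1 one_pos.le * m.1

/-- `(Df)(λ) = λ^{2/3} f(λ)`, as an operator `M → A`. -/
noncomputable def opD (m : MA) : CA := powFn (2/3) (by norm_num) * m.1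

/-- The adjoint `D* : A → M`, `(D*f)(λ) = λ^{2/3} f(λ)`. -/
noncomputable def opDStar (f : CA) : MA :=
  ⟨powFn (2/3) (by norm_num) * f, by
    simp [powFn, pt0, ContinuousMap.mul_apply]⟩

/-- The function `λ ↦ λ^{1/3}` as an element of `M`. -/
noncomputable def f13 : MA :=
  ⟨powFn (1/3) (by norm_num), by
    simp [powFn, pt0]⟩

lemma opD_f13_not_mem : opD f13 ∉ Set.range opA := by
  rintro ⟨m, hm⟩
  have key : ∀ x : Set.Icc (0:ℝ) 1, (x:ℝ) ≠ 0 → m.1 x = 1 := by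
    intro x hx
    have h := ContinuousMap.congr_fun hm x
    simp only [opA, opD, f13, powFn, ContinuousMap.mul_apply, ContinuousMap.coe_mk] at h
    have hpow : ((x:ℝ) ^ (2/3:ℝ)) * ((x:ℝ) ^ (1/3:ℝ)) = (x:ℝ) ^ (1:ℝ) := by
      rw [← Real.rpow_add_of_nonneg x.2.1 (by norm_num) (by norm_num)]; norm_num
    rw [← Complex.ofReal_mul, hpow] at h
    have hx1 : (Complex.ofReal ((x:ℝ) ^ (1:ℝ))) ≠ 0 := by
      simp [Real.rpow_one, hx]
    exact mul_left_cancel₀ hx1 (h.trans (mul_one _).symm)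
  -- sequence 1/(n+1) → 0
  have hseq : ∀ n : ℕ, (1:ℝ)/(n+1) ∈ Set.Icc (0:ℝ) 1 := by
    intro n
    constructor
    · positivity
    · rw [div_le_one (by positivity)]
      linarith [Nat.cast_nonneg (α := ℝ) n]
  set s : ℕ → Set.Icc (0:ℝ) 1 := fun n => ⟨1/(n+1), hseq n⟩ with hs_def
  have hs : Filter.Tendsto s Filter.atTop (nhds pt0) := by
    rw [tendsto_subtype_rng]
    exact tendsto_one_div_add_atTop_nhds_zero_nat
  have h1 : Filter.Tendsto (fun n => m.1 (s n)) Filter.atTop (nhds (m.1 pt0)) :=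
    (m.1.continuous.tendsto pt0).comp hs
  have h2 : (fun n => m.1 (s n)) = fun _ => (1:ℂ) := by
    funext n
    exact key (s n) (by positivity)
  rw [h2] at h1
  have := tendsto_nhds_unique h1 tendsto_const_nhds
  rw [m.2] at this
  exact one_ne_zero this.symm

/-- `range (DD*) ⊆ range A`, but `range D ⊄ range A`: for `f(λ) = λ^{1/3}` in `M`,
`Df ∉ range A`. -/
theorem stmt_15 :
    Set.range (opD ∘ opDStar) ⊆ Set.range opA ∧
    ¬ Set.range opD ⊆ Set.range opA ∧
    opD f13 ∉ Set.range opA := by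
  refine ⟨?_, fun h => opD_f13_not_mem (h ⟨f13, rfl⟩), opD_f13_not_mem⟩
  rintro - ⟨f, rfl⟩
  refine ⟨⟨powFn (1/3) (by norm_num) * f, by simp [powFn, pt0, ContinuousMap.mul_apply]⟩, ?_⟩
  ext x
  simp only [opA, opD, opDStar, powFn, Function.comp_apply, ContinuousMap.mul_apply,
    ContinuousMap.coe_mk]
  have hpow : ((x:ℝ) ^ (1:ℝ)) * ((x:ℝ) ^ (1/3:ℝ)) = ((x:ℝ) ^ (2/3:ℝ)) * ((x:ℝ) ^ (2/3:ℝ)) := by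
    rw [← Real.rpow_add_of_nonneg x.2.1 (by norm_num) (by norm_num),
        ← Real.rpow_add_of_nonneg x.2.1 (by norm_num) (by norm_num)]
    norm_num
  rw [← mul_assoc, ← mul_assoc, ← Complex.ofReal_mul, ← Complex.ofReal_mul, hpow]
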